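/- arXiv:2205.04765 — 3 statements merged into one kernel-verified Lean document; each statement's English description precedes it below -/
import Mathlib

section
/- For a Hermitian positive semidefinite matrix S ∈ ℂ^{M×M} with eigendecomposition S = VΛVᴴ (eigenvalues in decreasing order), the maximum of log det(I_S + Ṽᴴ S Ṽ) over all M×S matrices Ṽ with orthonormal columns is attained by Ṽ = V_{[1:S]}, the first S columns of V, and the maximum value is Σ_{i=1}^{S} log(1 + λ_i(S)). -/
open Matrix ComplexOrder

open Finset Equiv Equiv.Perm

private lemma det_compress_expand (m s : ℕ) (d : Fin m → ℝ)
    (W : Matrix (Fin m) (Fin s) ℂ) :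
    (s.factorial : ℂ) * (Wᴴ * Matrix.diagonal (fun i => (d i : ℂ)) * W).det
      = ∑ f : Fin s → Fin m,
          (((∏ i, d (f i)) * Complex.normSq ((W.submatrix f id).det) : ℝ) : ℂ) := by
  classical
  set A : Matrix (Fin s) (Fin m) ℂ := Wᴴ * Matrix.diagonal (fun i => (d i : ℂ)) with hA
  have hAval : ∀ i k, A i k = (starRingEnd ℂ) (W k i) * (d k : ℂ) := by
    intro i k
    simp [hA, Matrix.mul_diagonal, Matrix.conjTranspose_apply]
  set t : (Fin s → Fin m) → ℂ :=
    fun f => (∏ i, A i (f i)) * (W.submatrix f id).det with ht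
  have h1 : (A * W).det = ∑ f : Fin s → Fin m, t f := by
    have hrow : (A * W) = fun i => ∑ k, A i k • (W k) := by
      funext i j
      simp [Matrix.mul_apply, Finset.sum_apply]
    calc (A * W).det
        = Matrix.detRowAlternating (fun i => ∑ k, A i k • (W k)) := by
          rw [show ((A * W) : Matrix (Fin s) (Fin s) ℂ) = _ from hrow]; rfl
      _ = ∑ f : Fin s → Fin m, Matrix.detRowAlternating (fun i => A i (f i) • W (f i)) :=
          Matrix.detRowAlternating.toMultilinearMap.map_sum (fun i k => A i k • W k)
      _ = ∑ f : Fin s → Fin m, t f := by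
          refine Finset.sum_congr rfl fun f _ => ?_
          have h := Matrix.detRowAlternating.toMultilinearMap.map_smul_univ
            (fun j => A j (f j)) (fun j => (W (f j) : Fin s → ℂ))
          exact h
  have h2 : ∀ σ : Perm (Fin s), ∑ f : Fin s → Fin m, t (f ∘ σ) = ∑ f : Fin s → Fin m, t f := by
    intro σ
    exact Fintype.sum_bijective (fun f : Fin s → Fin m => f ∘ σ)
      ⟨fun f g h => by
        funext i
        have := congrFun h (σ.symm i)
        simpa using this,
       fun g => ⟨g ∘ σ.symm, by funext i; simp⟩⟩
      (fun f => t (f ∘ σ)) t (fun f => rfl)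
  have h3 : (s.factorial : ℂ) * ∑ f : Fin s → Fin m, t f
      = ∑ f : Fin s → Fin m, ∑ σ : Perm (Fin s), t (f ∘ σ) := by
    rw [Finset.sum_comm]
    rw [Finset.sum_congr rfl fun (σ : Perm (Fin s)) _ => h2 σ]
    rw [Finset.sum_const, Finset.card_univ, Fintype.card_perm, Fintype.card_fin,
      nsmul_eq_mul]
  have h4 : ∀ f : Fin s → Fin m, ∑ σ : Perm (Fin s), t (f ∘ σ)
      = (((∏ i, d (f i)) * Complex.normSq ((W.submatrix f id).det) : ℝ) : ℂ) := by
    intro f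
    have hstep : ∀ σ : Perm (Fin s), t (f ∘ σ)
        = (((Equiv.Perm.sign σ : ℤ) : ℂ) * ∏ i, (starRingEnd ℂ) (W (f (σ i)) i))
            * ((∏ i, (d (f i) : ℂ)) * (W.submatrix f id).det) := by
      intro σ
      have hdet : (W.submatrix (f ∘ σ) id).det
          = ((Equiv.Perm.sign σ : ℤ) : ℂ) * (W.submatrix f id).det := by
        have h : W.submatrix (f ∘ σ) id = (W.submatrix f id).submatrix σ id := by
          ext i j; rfl
        rw [h, Matrix.det_permute]
      have hprod : (∏ i, A i ((f ∘ σ) i))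
          = (∏ i, (starRingEnd ℂ) (W (f (σ i)) i)) * ∏ i, (d (f i) : ℂ) := by
        calc (∏ i, A i ((f ∘ σ) i))
            = ∏ i, ((starRingEnd ℂ) (W (f (σ i)) i) * (d (f (σ i)) : ℂ)) := by
              refine Finset.prod_congr rfl fun i _ => ?_
              exact hAval i (f (σ i))
          _ = (∏ i, (starRingEnd ℂ) (W (f (σ i)) i)) * ∏ i, (d (f (σ i)) : ℂ) :=
              Finset.prod_mul_distrib
          _ = (∏ i, (starRingEnd ℂ) (W (f (σ i)) i)) * ∏ i, (d (f i) : ℂ) := by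
              rw [Equiv.prod_comp σ (fun i => (d (f i) : ℂ))]
      rw [ht]
      simp only [hdet, hprod]
      ring
    calc ∑ σ : Perm (Fin s), t (f ∘ σ)
        = (∑ σ : Perm (Fin s), ((Equiv.Perm.sign σ : ℤ) : ℂ)
              * ∏ i, (starRingEnd ℂ) (W (f (σ i)) i))
            * ((∏ i, (d (f i) : ℂ)) * (W.submatrix f id).det) := by
          rw [Finset.sum_congr rfl fun σ _ => hstep σ, ← Finset.sum_mul]
      _ = (starRingEnd ℂ) ((W.submatrix f id).det)
            * ((∏ i, (d (f i) : ℂ)) * (W.submatrix f id).det) := by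
          congr 1
          rw [Matrix.det_apply']
          simp [map_sum, _root_.map_mul, map_prod]
      _ = (((∏ i, d (f i)) * Complex.normSq ((W.submatrix f id).det) : ℝ) : ℂ) := by
          push_cast
          rw [← Complex.mul_conj]
          ring
  calc (s.factorial : ℂ) * (Wᴴ * Matrix.diagonal (fun i => (d i : ℂ)) * W).det
      = (s.factorial : ℂ) * ∑ f : Fin s → Fin m, t f := by rw [← hA, h1]
    _ = ∑ f : Fin s → Fin m, ∑ σ : Perm (Fin s), t (f ∘ σ) := h3
    _ = _ := Finset.sum_congr rfl fun f _ => h4 f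

private lemma prod_le_of_inj {m s : ℕ} (hs : s ≤ m) (d : Fin m → ℝ) (hdec : Antitone d)
    (hd0 : ∀ i, 0 ≤ d i) (f : Fin s → Fin m) (hf : Function.Injective f) :
    ∏ i : Fin s, d (f i) ≤ ∏ i : Fin s, d (Fin.castLE hs i) := by
  classical
  set T : Finset (Fin m) := Finset.univ.image f with hTdef
  have hT : T.card = s := by
    rw [hTdef, Finset.card_image_of_injective _ hf, Finset.card_univ, Fintype.card_fin]
  set g : Fin s → Fin m := fun i => T.orderEmbOfFin hT i with hg
  have hmono : StrictMono g := (T.orderEmbOfFin hT).strictMono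
  have hle : ∀ i : Fin s, (i : ℕ) ≤ (g i : ℕ) := by
    have key : ∀ n : ℕ, ∀ i : Fin s, (i : ℕ) = n → n ≤ (g i : ℕ) := by
      intro n
      induction n with
      | zero => intro i _; exact Nat.zero_le _
      | succ k ih =>
        intro i hi
        have hk : k < s := by omega
        have h1 := ih ⟨k, hk⟩ rfl
        have h2 : g ⟨k, hk⟩ < g i := hmono (by rw [Fin.lt_def]; simp; omega)
        rw [Fin.lt_def] at h2
        omega
    exact fun i => key (i : ℕ) i rfl
  have him : Finset.univ.image g = T := by
    ext x
    simp only [Finset.mem_image, Finset.mem_univ, true_and]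
    constructor
    · rintro ⟨i, rfl⟩; exact Finset.orderEmbOfFin_mem T hT i
    · intro hx
      have : x ∈ Set.range (T.orderEmbOfFin hT) := by
        rw [Finset.range_orderEmbOfFin]; exact hx
      obtain ⟨i, hi⟩ := this
      exact ⟨i, hi⟩
  have h1 : ∏ i : Fin s, d (f i) = ∏ x ∈ T, d x :=
    (Finset.prod_image (fun x _ y _ h => hf h)).symm
  have h2 : ∏ x ∈ T, d x = ∏ i : Fin s, d (g i) := by
    rw [← him]; exact Finset.prod_image (fun x _ y _ h => hmono.injective h)
  rw [h1, h2]
  refine Finset.prod_le_prod (fun i _ => hd0 _) (fun i _ => hdec ?_)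
  rw [Fin.le_def]
  exact hle i

private lemma det_compress_bounds {m s : ℕ} (hs : s ≤ m) (d : Fin m → ℝ)
    (hdec : Antitone d) (hd0 : ∀ i, 0 ≤ d i)
    (W : Matrix (Fin m) (Fin s) ℂ) (hW : Wᴴ * W = 1) :
    0 ≤ (Wᴴ * Matrix.diagonal (fun i => (d i : ℂ)) * W).det.re ∧
    (Wᴴ * Matrix.diagonal (fun i => (d i : ℂ)) * W).det.re
      ≤ ∏ i : Fin s, d (Fin.castLE hs i) := by
  classical
  set X := (Wᴴ * Matrix.diagonal (fun i => (d i : ℂ)) * W).det with hX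
  set r : ℝ := ∑ f : Fin s → Fin m,
      (∏ i, d (f i)) * Complex.normSq ((W.submatrix f id).det) with hr
  have hkey : (s.factorial : ℝ) * X.re = r := by
    have h := det_compress_expand m s d W
    have h' : (s.factorial : ℂ) * X = ((r : ℝ) : ℂ) := by
      rw [hX, h, hr, Complex.ofReal_sum]
    have := congrArg Complex.re h'
    simpa [Complex.mul_re] using this
  have hone : (s.factorial : ℝ)
      = ∑ f : Fin s → Fin m, Complex.normSq ((W.submatrix f id).det) := by
    have h := det_compress_expand m s (fun _ => (1 : ℝ)) W
    have hdiag : Matrix.diagonal (fun _ : Fin m => ((1 : ℝ) : ℂ)) = 1 := by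
      simp
    rw [hdiag, Matrix.mul_one, hW, Matrix.det_one, mul_one] at h
    have h' : (s.factorial : ℂ)
        = ((∑ f : Fin s → Fin m, Complex.normSq ((W.submatrix f id).det) : ℝ) : ℂ) := by
      rw [h, Complex.ofReal_sum]
      simp
    exact_mod_cast h'
  have hterm : ∀ f : Fin s → Fin m,
      (∏ i, d (f i)) * Complex.normSq ((W.submatrix f id).det)
        ≤ (∏ i : Fin s, d (Fin.castLE hs i)) * Complex.normSq ((W.submatrix f id).det) := by
    intro f
    by_cases hf : Function.Injective f
    · exact mul_le_mul_of_nonneg_right (prod_le_of_inj hs d hdec hd0 f hf)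
        (Complex.normSq_nonneg _)
    · have : (W.submatrix f id).det = 0 := by
        rw [Function.not_injective_iff] at hf
        obtain ⟨i, j, hij, hne⟩ := hf
        refine Matrix.det_zero_of_row_eq hne ?_
        funext k
        simp [Matrix.submatrix_apply, hij]
      simp [this]
  have hrle : r ≤ (∏ i : Fin s, d (Fin.castLE hs i)) * (s.factorial : ℝ) := by
    calc r ≤ ∑ f : Fin s → Fin m,
          (∏ i : Fin s, d (Fin.castLE hs i)) * Complex.normSq ((W.submatrix f id).det) :=
        Finset.sum_le_sum fun f _ => hterm f
      _ = (∏ i : Fin s, d (Fin.castLE hs i)) * (s.factorial : ℝ) := by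
        rw [← Finset.mul_sum, hone]
  have hr0 : 0 ≤ r := by
    refine Finset.sum_nonneg fun f _ => mul_nonneg ?_ (Complex.normSq_nonneg _)
    exact Finset.prod_nonneg fun i _ => hd0 _
  have hfac : (0 : ℝ) < (s.factorial : ℝ) := by exact_mod_cast s.factorial_pos
  constructor
  · nlinarith [hkey, hr0]
  · nlinarith [hkey, hrle]


/-- For Hermitian PSD `S = VΛVᴴ` with decreasing eigenvalues, the maximum of
`log det(I_s + Ṽᴴ S Ṽ)` over `M×s` matrices with orthonormal columns is attained
at the first `s` columns of `V`, with value `Σ_{i=1}^s log(1 + λ_i)`. -/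
theorem logdet_maximizer_principal_eigenvectors (m s : ℕ) (hs : s ≤ m)
    (Smat : Matrix (Fin m) (Fin m) ℂ) (hS : Smat.PosSemidef)
    (V : Matrix (Fin m) (Fin m) ℂ) (hV : Vᴴ * V = 1 ∧ V * Vᴴ = 1)
    (lam : Fin m → ℝ) (hdec : Antitone lam) (hnn : ∀ i, 0 ≤ lam i)
    (hdecomp : Smat = V * Matrix.diagonal (fun i => (lam i : ℂ)) * Vᴴ) :
    (∀ Vt : Matrix (Fin m) (Fin s) ℂ, Vtᴴ * Vt = 1 →
      Real.log ((1 + Vtᴴ * Smat * Vt).det.re)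
        ≤ ∑ i : Fin s, Real.log (1 + lam (Fin.castLE hs i)))
    ∧ Real.log
        ((1 + (V.submatrix id (Fin.castLE hs))ᴴ * Smat *
          (V.submatrix id (Fin.castLE hs))).det.re)
      = ∑ i : Fin s, Real.log (1 + lam (Fin.castLE hs i)) := by
  classical
  set d : Fin m → ℝ := fun i => 1 + lam i with hd
  have hd_dec : Antitone d := fun a b hab => add_le_add_right (hdec hab) 1
  have hd0 : ∀ i, 0 ≤ d i := fun i => by have := hnn i; simp [hd]; linarith
  have hdpos : ∀ i : Fin s, (0 : ℝ) < 1 + lam (Fin.castLE hs i) := fun i => by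
    have := hnn (Fin.castLE hs i); linarith
  have hlogprod : Real.log (∏ i : Fin s, (1 + lam (Fin.castLE hs i)))
      = ∑ i : Fin s, Real.log (1 + lam (Fin.castLE hs i)) :=
    Real.log_prod fun i _ => ne_of_gt (hdpos i)
  constructor
  · intro Vt hVt
    set W : Matrix (Fin m) (Fin s) ℂ := Vᴴ * Vt with hW
    have hWW : Wᴴ * W = 1 := by
      rw [hW, Matrix.conjTranspose_mul, Matrix.conjTranspose_conjTranspose]
      calc Vtᴴ * V * (Vᴴ * Vt) = Vtᴴ * (V * Vᴴ) * Vt := by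
            simp only [Matrix.mul_assoc]
        _ = 1 := by rw [hV.2, Matrix.mul_one, hVt]
    have hmat : (1 : Matrix (Fin s) (Fin s) ℂ) + Vtᴴ * Smat * Vt
        = Wᴴ * Matrix.diagonal (fun i => (d i : ℂ)) * W := by
      have hdiag : Matrix.diagonal (fun i => (d i : ℂ))
          = 1 + Matrix.diagonal (fun i => (lam i : ℂ)) := by
        rw [← Matrix.diagonal_one, Matrix.diagonal_add]
        congr 1
        funext i
        simp [hd]
      rw [hdiag, Matrix.mul_add, Matrix.add_mul, Matrix.mul_one, hWW, hdecomp]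
      congr 1
      rw [hW, Matrix.conjTranspose_mul, Matrix.conjTranspose_conjTranspose]
      simp only [Matrix.mul_assoc]
    obtain ⟨h0, hle⟩ := det_compress_bounds hs d hd_dec hd0 W hWW
    rw [← hmat] at h0 hle
    have hle' : (1 + Vtᴴ * Smat * Vt).det.re ≤ ∏ i : Fin s, (1 + lam (Fin.castLE hs i)) := hle
    rcases eq_or_lt_of_le h0 with h | h
    · rw [← h, Real.log_zero]
      exact Finset.sum_nonneg fun i _ => Real.log_nonneg (by have := hnn (Fin.castLE hs i); linarith)
    · rw [← hlogprod]
      exact Real.log_le_log h hle'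
  · have hVS : Vᴴ * Smat * V = Matrix.diagonal (fun i => (lam i : ℂ)) := by
      rw [hdecomp]
      calc Vᴴ * (V * Matrix.diagonal (fun i => (lam i : ℂ)) * Vᴴ) * V
          = (Vᴴ * V) * Matrix.diagonal (fun i => (lam i : ℂ)) * (Vᴴ * V) := by
            simp only [Matrix.mul_assoc]
        _ = Matrix.diagonal (fun i => (lam i : ℂ)) := by
            rw [hV.1, Matrix.one_mul, Matrix.mul_one]
    have hsub : (V.submatrix id (Fin.castLE hs))ᴴ * Smat * (V.submatrix id (Fin.castLE hs))
        = Matrix.diagonal (fun i : Fin s => (lam (Fin.castLE hs i) : ℂ)) := by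
      have h1 : (V.submatrix id (Fin.castLE hs))ᴴ * Smat * (V.submatrix id (Fin.castLE hs))
          = (Vᴴ * Smat * V).submatrix (Fin.castLE hs) (Fin.castLE hs) := by
        ext i j
        simp [Matrix.mul_apply, Matrix.conjTranspose_apply, Matrix.submatrix_apply,
          Finset.sum_mul, Finset.mul_sum]
      rw [h1, hVS, Matrix.submatrix_diagonal _ _ (Fin.castLE_injective hs)]
      rfl
    have hdet : (1 + (V.submatrix id (Fin.castLE hs))ᴴ * Smat *
          (V.submatrix id (Fin.castLE hs))).det
        = ((∏ i : Fin s, (1 + lam (Fin.castLE hs i)) : ℝ) : ℂ) := by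
      rw [hsub]
      have : (1 : Matrix (Fin s) (Fin s) ℂ) + Matrix.diagonal (fun i : Fin s => (lam (Fin.castLE hs i) : ℂ))
          = Matrix.diagonal (fun i : Fin s => ((1 + lam (Fin.castLE hs i) : ℝ) : ℂ)) := by
        rw [← Matrix.diagonal_one, Matrix.diagonal_add]
        congr 1
        funext i
        push_cast
        ring
      rw [this, Matrix.det_diagonal, Complex.ofReal_prod]
    rw [hdet]
    simp only [Complex.ofReal_re]
    exact hlogprod
end

section
/- WMMSE equivalence: log det(I_S + (1/σ²) H P Hᴴ) = −min over W ≻ 0 and U of [tr(W E(U)) − log det(W) − N], where E(U) = σ²UᴴU + (UᴴHP^{1/2} − I_N)(UᴴHP^{1/2} − I_N)ᴴ; the minimum is attained at U = U_opt (the MMSE receiver) and W = E(U_opt)⁻¹. -/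
open Matrix ComplexOrder

/-- The square root of a positive semidefinite matrix, as `Matrix.PosSemidef.sqrt` was
defined in Mathlib (Dec 2024); it has since been removed in favour of `CFC.sqrt`. -/
noncomputable def Matrix.PosSemidef.sqrt {n 𝕜 : Type*} [RCLike 𝕜] [Fintype n] [DecidableEq n]
    {A : Matrix n n 𝕜} (hA : A.PosSemidef) : Matrix n n 𝕜 :=
  (hA.1.eigenvectorUnitary : Matrix n n 𝕜) * diagonal (((↑) : ℝ → 𝕜) ∘ (Real.sqrt ∘ hA.1.eigenvalues)) *
    (star hA.1.eigenvectorUnitary : Matrix n n 𝕜)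

/-- The MSE matrix `E(U) = σ²UᴴU + (UᴴHP^{1/2} − I)(UᴴHP^{1/2} − I)ᴴ`. -/
noncomputable def mseMat {S N : ℕ} (σ2 : ℝ)
    (H : Matrix (Fin S) (Fin N) ℂ) (Phalf : Matrix (Fin N) (Fin N) ℂ)
    (U : Matrix (Fin S) (Fin N) ℂ) : Matrix (Fin N) (Fin N) ℂ :=
  σ2 • (Uᴴ * U) + (Uᴴ * H * Phalf - 1) * (Uᴴ * H * Phalf - 1)ᴴ

/-- The MMSE (Wiener) receiver `U_opt = (σ²I + HPHᴴ)⁻¹HP^{1/2}`. -/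
noncomputable def mmseReceiver {S N : ℕ} (σ2 : ℝ)
    (H : Matrix (Fin S) (Fin N) ℂ) (P Phalf : Matrix (Fin N) (Fin N) ℂ) :
    Matrix (Fin S) (Fin N) ℂ :=
  (σ2 • (1 : Matrix (Fin S) (Fin S) ℂ) + H * P * Hᴴ)⁻¹ * H * Phalf

lemma Matrix.PosSemidef.posSemidef_sqrt {n 𝕜 : Type*} [RCLike 𝕜] [Fintype n] [DecidableEq n]
    {A : Matrix n n 𝕜} (hA : A.PosSemidef) : hA.sqrt.PosSemidef := by
  unfold Matrix.PosSemidef.sqrt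
  have hD : (diagonal (((↑) : ℝ → 𝕜) ∘ (Real.sqrt ∘ hA.1.eigenvalues))).PosSemidef := by
    rw [posSemidef_diagonal_iff]
    intro i
    exact RCLike.ofReal_nonneg.mpr (Real.sqrt_nonneg _)
  have := hD.mul_mul_conjTranspose_same (hA.1.eigenvectorUnitary : Matrix n n 𝕜)
  rw [Matrix.star_eq_conjTranspose]
  exact this

lemma Matrix.PosSemidef.sqrt_mul_self {n 𝕜 : Type*} [RCLike 𝕜] [Fintype n] [DecidableEq n]
    {A : Matrix n n 𝕜} (hA : A.PosSemidef) : hA.sqrt * hA.sqrt = A := by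
  have hU : (star hA.1.eigenvectorUnitary : Matrix n n 𝕜) * (hA.1.eigenvectorUnitary : Matrix n n 𝕜) = 1 :=
    Unitary.coe_star_mul_self _
  conv_rhs => rw [hA.1.spectral_theorem, Unitary.conjStarAlgAut_apply]
  unfold Matrix.PosSemidef.sqrt
  set U : Matrix n n 𝕜 := (hA.1.eigenvectorUnitary : Matrix n n 𝕜)
  set V : Matrix n n 𝕜 := (star hA.1.eigenvectorUnitary : Matrix n n 𝕜)
  set D := diagonal (((↑) : ℝ → 𝕜) ∘ (Real.sqrt ∘ hA.1.eigenvalues))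
  have hDD : D * D = diagonal (RCLike.ofReal ∘ hA.1.eigenvalues) := by
    rw [diagonal_mul_diagonal]
    congr 1
    funext i
    simp only [Function.comp_apply, ← RCLike.ofReal_mul, Real.mul_self_sqrt (hA.eigenvalues_nonneg i)]
  calc U * D * V * (U * D * V) = U * D * (V * U) * D * V := by simp only [Matrix.mul_assoc]
    _ = U * (D * D) * V := by rw [hU, Matrix.mul_one, Matrix.mul_assoc U D D]
    _ = _ := by rw [hDD]

variable {N S : ℕ}

lemma real_smul_matrix (r : ℝ) (M : Matrix (Fin S) (Fin N) ℂ) :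
    r • M = (r : ℂ) • M := by
  ext i j; simp [Complex.real_smul]

lemma psd_trace_re_nonneg {M : Matrix (Fin N) (Fin N) ℂ} (hM : M.PosSemidef) :
    0 ≤ M.trace.re := by
  have h : ∀ i, 0 ≤ M i i := fun i => by simpa [dotProduct, Pi.single_apply, apply_ite] using hM.dotProduct_mulVec_nonneg (Pi.single i 1)
  rw [Matrix.trace, Complex.re_sum]
  exact Finset.sum_nonneg fun i _ => (Complex.nonneg_iff.mp (h i)).1

lemma trace_mul_re_nonneg {W D : Matrix (Fin N) (Fin N) ℂ}
    (hW : W.PosSemidef) (hD : D.PosSemidef) : 0 ≤ (W * D).trace.re := by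
  have h1 : W * D = hW.sqrt * ((hW.sqrt * D)) := by
    rw [← Matrix.mul_assoc, hW.sqrt_mul_self]
  rw [h1, Matrix.trace_mul_comm]
  have h2 : hW.sqrt * D * hW.sqrt = (hW.sqrt)ᴴ * D * hW.sqrt := by
    rw [hW.posSemidef_sqrt.1]
  rw [h2]
  exact psd_trace_re_nonneg (hD.conjTranspose_mul_mul_same _)

lemma trace_eq_sum_eigs {M : Matrix (Fin N) (Fin N) ℂ} (hM : M.IsHermitian) :
    M.trace = ∑ i, (hM.eigenvalues i : ℂ) := by
  conv_lhs => rw [hM.spectral_theorem, Unitary.conjStarAlgAut_apply]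
  rw [Matrix.trace_mul_cycle]
  rw [Matrix.mem_unitaryGroup_iff'.mp (hM.eigenvectorUnitary).2,
    one_mul, Matrix.trace_diagonal]
  simp [Function.comp]

lemma log_det_re_le {M : Matrix (Fin N) (Fin N) ℂ} (hM : M.PosDef) :
    Real.log M.det.re ≤ M.trace.re - N := by
  have hdet : M.det = ((∏ i, hM.1.eigenvalues i : ℝ) : ℂ) := by
    rw [hM.1.det_eq_prod_eigenvalues]; push_cast; rfl
  have htr : M.trace = ((∑ i, hM.1.eigenvalues i : ℝ) : ℂ) := by
    rw [trace_eq_sum_eigs hM.1]; push_cast; rfl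
  rw [hdet, Complex.ofReal_re, htr, Complex.ofReal_re]
  have hpos := hM.eigenvalues_pos
  rw [Real.log_prod (fun i _ => (hpos i).ne')]
  calc ∑ i, Real.log (hM.1.eigenvalues i) ≤ ∑ i, (hM.1.eigenvalues i - 1) :=
      Finset.sum_le_sum fun i _ => Real.log_le_sub_one_of_pos (hpos i)
    _ = (∑ i, hM.1.eigenvalues i) - N := by
      rw [Finset.sum_sub_distrib]; simp

lemma det_re_pos {M : Matrix (Fin N) (Fin N) ℂ} (hM : M.PosDef) :
    0 < M.det.re ∧ M.det = (M.det.re : ℂ) := by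
  have h := hM.det_pos
  obtain ⟨h1, h2⟩ := Complex.pos_iff.mp h
  exact ⟨h1, Complex.ext rfl (by simp [← h2])⟩

lemma smul_posDef {r : ℝ} (hr : 0 < r) {M : Matrix (Fin N) (Fin N) ℂ} (hM : M.PosDef) :
    (r • M).PosDef := by
  rw [real_smul_matrix]
  refine Matrix.PosDef.of_dotProduct_mulVec_pos ?_ fun x hx => ?_
  · show _ᴴ = _
    rw [conjTranspose_smul]
    simp [hM.1.eq]
  · have := hM.dotProduct_mulVec_pos hx
    rw [smul_mulVec, dotProduct_smul, smul_eq_mul]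
    exact mul_pos (Complex.zero_lt_real.mpr hr) this

variable {N S : ℕ}

lemma dot_conj_eq (M : Matrix (Fin S) (Fin N) ℂ) (x : Fin N → ℂ) :
    star x ⬝ᵥ ((Mᴴ * M) *ᵥ x) = star (M *ᵥ x) ⬝ᵥ (M *ᵥ x) := by
  rw [← mulVec_mulVec, dotProduct_mulVec, ← star_mulVec]

lemma mse_decomp (σ2 : ℝ) (A : Matrix (Fin S) (Fin S) ℂ) (B : Matrix (Fin S) (Fin N) ℂ)
    (hAH : Aᴴ = A) (h1 : A * A⁻¹ = 1) (h2 : A⁻¹ * A = 1)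
    (hAdef : A = σ2 • (1 : Matrix (Fin S) (Fin S) ℂ) + B * Bᴴ)
    (U : Matrix (Fin S) (Fin N) ℂ) :
    σ2 • (Uᴴ * U) + (Uᴴ * B - 1) * (Uᴴ * B - 1)ᴴ
      = (U - A⁻¹ * B)ᴴ * A * (U - A⁻¹ * B) + (1 - Bᴴ * A⁻¹ * B) := by
  have hinvH : (A⁻¹)ᴴ = A⁻¹ := by rw [Matrix.conjTranspose_nonsing_inv, hAH]
  have e1 : (U - A⁻¹ * B)ᴴ = Uᴴ - Bᴴ * A⁻¹ := by
    rw [conjTranspose_sub, conjTranspose_mul, hinvH]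
  have e2 : (Uᴴ * B - 1)ᴴ = Bᴴ * U - 1 := by
    rw [conjTranspose_sub, conjTranspose_mul, conjTranspose_conjTranspose, conjTranspose_one]
  have hc1 : ∀ C : Matrix (Fin S) (Fin N) ℂ, A * (A⁻¹ * C) = C := fun C => by
    rw [← Matrix.mul_assoc, h1, Matrix.one_mul]
  have hc2 : ∀ C : Matrix (Fin S) (Fin N) ℂ, A⁻¹ * (A * C) = C := fun C => by
    rw [← Matrix.mul_assoc, h2, Matrix.one_mul]
  rw [e1, e2]
  simp only [Matrix.sub_mul, Matrix.mul_sub, Matrix.mul_one, Matrix.one_mul, Matrix.mul_assoc,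
    hc1, hc2]
  rw [hAdef]
  simp only [Matrix.add_mul, Matrix.mul_add, Matrix.smul_mul, Matrix.mul_smul, Matrix.one_mul,
    Matrix.mul_one, Matrix.mul_assoc]
  abel

lemma mse_posDef {σ2 : ℝ} (hσ : 0 < σ2) (B : Matrix (Fin S) (Fin N) ℂ)
    (U : Matrix (Fin S) (Fin N) ℂ) :
    (σ2 • (Uᴴ * U) + (Uᴴ * B - 1) * (Uᴴ * B - 1)ᴴ).PosDef := by
  set C := Uᴴ * B - 1 with hC
  refine Matrix.PosDef.of_dotProduct_mulVec_pos ?_ fun x hx => ?_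
  · show _ᴴ = _
    simp [conjTranspose_add, conjTranspose_smul, conjTranspose_mul, Matrix.mul_assoc]
  · rw [add_mulVec, dotProduct_add, smul_mulVec, dotProduct_smul]
    have hterm2 : star x ⬝ᵥ ((C * Cᴴ) *ᵥ x) = star (Cᴴ *ᵥ x) ⬝ᵥ (Cᴴ *ᵥ x) := by
      have := dot_conj_eq Cᴴ x
      rwa [conjTranspose_conjTranspose] at this
    have hterm1 : star x ⬝ᵥ ((Uᴴ * U) *ᵥ x) = star (U *ᵥ x) ⬝ᵥ (U *ᵥ x) := dot_conj_eq U x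
    rw [hterm1, hterm2]
    by_cases hz : U *ᵥ x = 0
    · have hy : Cᴴ *ᵥ x = -x := by
        rw [hC, conjTranspose_sub, conjTranspose_mul, conjTranspose_conjTranspose,
          conjTranspose_one, sub_mulVec, one_mulVec, ← mulVec_mulVec, hz, mulVec_zero, zero_sub]
      rw [hz, hy]
      simp only [dotProduct_zero, smul_zero, zero_add, star_neg, neg_dotProduct,
        dotProduct_neg, neg_neg]
      exact dotProduct_star_self_pos_iff.mpr hx
    · have h1 : 0 < σ2 • (star (U *ᵥ x) ⬝ᵥ (U *ᵥ x)) := by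
        rw [Complex.real_smul]
        exact mul_pos (Complex.zero_lt_real.mpr hσ) (dotProduct_star_self_pos_iff.mpr hz)
      exact add_pos_of_pos_of_nonneg h1 (dotProduct_star_self_nonneg _)

lemma posdef_conj {M : Matrix (Fin N) (Fin N) ℂ} (hM : M.PosDef)
    {R : Matrix (Fin N) (Fin N) ℂ} (hR : IsUnit R) (hRH : Rᴴ = R) :
    (R * M * R).PosDef := by
  refine Matrix.PosDef.of_dotProduct_mulVec_pos ?_ fun x hx => ?_
  · show _ᴴ = _
    rw [conjTranspose_mul, conjTranspose_mul, hRH, hM.1.eq, Matrix.mul_assoc]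
  · have hy : R *ᵥ x ≠ 0 := fun h =>
      hx (by simpa using (Matrix.mulVec_injective_iff_isUnit.mpr hR) (h.trans (mulVec_zero R).symm))
    have hpos := hM.dotProduct_mulVec_pos hy
    have : star x ⬝ᵥ ((R * M * R) *ᵥ x) = star (R *ᵥ x) ⬝ᵥ (M *ᵥ (R *ᵥ x)) := by
      conv_lhs => rw [show R * M * R = Rᴴ * (M * R) by rw [hRH, Matrix.mul_assoc]]
      rw [← mulVec_mulVec, dotProduct_mulVec, ← star_mulVec, mulVec_mulVec, ← mulVec_mulVec]
    rwa [this]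

/-- WMMSE equivalence: `log det(I + (1/σ²)HPHᴴ) = −min_{W≻0,U}[tr(WE(U)) −
log det W − N]`, attained at the MMSE receiver `U_opt` and `W = E(U_opt)⁻¹`. -/
theorem wmmse_equivalence (S N : ℕ) (σ2 : ℝ) (hσ : 0 < σ2)
    (H : Matrix (Fin S) (Fin N) ℂ) (P : Matrix (Fin N) (Fin N) ℂ)
    (hP : P.PosSemidef) :
    (∀ (W : Matrix (Fin N) (Fin N) ℂ), W.PosDef →
      ∀ U : Matrix (Fin S) (Fin N) ℂ,
        -(Real.log ((1 + σ2⁻¹ • (H * P * Hᴴ)).det.re)) ≤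
          (Matrix.trace (W * mseMat σ2 H hP.sqrt U)).re - Real.log (W.det.re) - N)
    ∧ (Matrix.trace
          ((mseMat σ2 H hP.sqrt (mmseReceiver σ2 H P hP.sqrt))⁻¹ *
            mseMat σ2 H hP.sqrt (mmseReceiver σ2 H P hP.sqrt))).re
        - Real.log (((mseMat σ2 H hP.sqrt (mmseReceiver σ2 H P hP.sqrt))⁻¹).det.re)
        - N
      = -(Real.log ((1 + σ2⁻¹ • (H * P * Hᴴ)).det.re)) := by
  classical
  set Q : Matrix (Fin N) (Fin N) ℂ := hP.sqrt with hQdef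
  have hQH : Qᴴ = Q := hP.posSemidef_sqrt.1
  have hQQ : Q * Q = P := hP.sqrt_mul_self
  set A : Matrix (Fin S) (Fin S) ℂ := σ2 • 1 + H * P * Hᴴ with hA_def
  set B : Matrix (Fin S) (Fin N) ℂ := H * Q with hB_def
  have hBB : B * Bᴴ = H * P * Hᴴ := by
    rw [hB_def, conjTranspose_mul, hQH, Matrix.mul_assoc, ← Matrix.mul_assoc Q Q Hᴴ, hQQ,
      ← Matrix.mul_assoc]
  have hAdef' : A = σ2 • 1 + B * Bᴴ := by rw [hBB]
  have hσ1 : (σ2 • (1 : Matrix (Fin S) (Fin S) ℂ)).PosDef := smul_posDef hσ Matrix.PosDef.one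
  have hA : A.PosDef := by
    rw [hA_def]; exact hσ1.add_posSemidef (hP.mul_mul_conjTranspose_same H)
  have hdetA : IsUnit A.det := hA.det_pos.ne'.isUnit
  have h1 : A * A⁻¹ = 1 := Matrix.mul_nonsing_inv A hdetA
  have h2 : A⁻¹ * A = 1 := Matrix.nonsing_inv_mul A hdetA
  set Uopt : Matrix (Fin S) (Fin N) ℂ := A⁻¹ * B with hUopt
  have hUoptEq : mmseReceiver σ2 H P Q = Uopt := by
    rw [mmseReceiver, hUopt, ← hA_def, hB_def, Matrix.mul_assoc]
  set Emin : Matrix (Fin N) (Fin N) ℂ := 1 - Bᴴ * A⁻¹ * B with hEmin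
  have hmse : ∀ U : Matrix (Fin S) (Fin N) ℂ,
      mseMat σ2 H Q U = σ2 • (Uᴴ * U) + (Uᴴ * B - 1) * (Uᴴ * B - 1)ᴴ := by
    intro U
    rw [mseMat, hB_def, Matrix.mul_assoc]
  have hdecomp : ∀ U, mseMat σ2 H Q U = (U - Uopt)ᴴ * A * (U - Uopt) + Emin := fun U => by
    rw [hmse U, hUopt, hEmin]
    exact mse_decomp σ2 A B hA.1 h1 h2 hAdef' U
  have hmsePD : ∀ U, (mseMat σ2 H Q U).PosDef := fun U => by
    rw [hmse U]; exact mse_posDef hσ B U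
  have hEminEq : mseMat σ2 H Q Uopt = Emin := by
    rw [hdecomp Uopt, sub_self, conjTranspose_zero, Matrix.zero_mul, Matrix.zero_mul, zero_add]
  have hEminPD : Emin.PosDef := hEminEq ▸ hmsePD Uopt
  -- the matrix K
  have hKA : (1 + σ2⁻¹ • (H * P * Hᴴ) : Matrix (Fin S) (Fin S) ℂ) = σ2⁻¹ • A := by
    rw [hA_def, smul_add, smul_smul, inv_mul_cancel₀ hσ.ne', one_smul]
  have hKPD : (1 + σ2⁻¹ • (H * P * Hᴴ) : Matrix (Fin S) (Fin S) ℂ).PosDef := by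
    rw [hKA]; exact smul_posDef (inv_pos.mpr hσ) hA
  -- determinant identities
  have hAmB : A - B * Bᴴ = σ2 • 1 := by rw [hAdef', add_sub_cancel_right]
  have hEminDet : Emin.det = (σ2 : ℂ) ^ S * A.det⁻¹ := by
    rw [hEmin]
    rw [show (1 : Matrix (Fin N) (Fin N) ℂ) - Bᴴ * A⁻¹ * B = 1 + (Bᴴ * A⁻¹) * (-B) by
      rw [Matrix.mul_neg, sub_eq_add_neg]]
    rw [Matrix.det_one_add_mul_comm]
    rw [show (1 : Matrix (Fin S) (Fin S) ℂ) + (-B) * (Bᴴ * A⁻¹) = (σ2 : ℂ) • A⁻¹ by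
      rw [Matrix.neg_mul, ← Matrix.mul_assoc, ← sub_eq_add_neg, ← h1, ← Matrix.sub_mul, hAmB,
        real_smul_matrix, Matrix.smul_mul, Matrix.one_mul]]
    rw [Matrix.det_smul, Matrix.det_nonsing_inv, Ring.inverse_eq_inv']
    simp
  have hKdet : (1 + σ2⁻¹ • (H * P * Hᴴ) : Matrix (Fin S) (Fin S) ℂ).det
      = ((σ2 : ℂ))⁻¹ ^ S * A.det := by
    rw [hKA, real_smul_matrix, Matrix.det_smul, Complex.ofReal_inv]
    simp
  have hσC : (σ2 : ℂ) ≠ 0 := Complex.ofReal_ne_zero.mpr hσ.ne'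
  have hdetprod : (1 + σ2⁻¹ • (H * P * Hᴴ) : Matrix (Fin S) (Fin S) ℂ).det * Emin.det = 1 := by
    rw [hKdet, hEminDet]
    field_simp
    rw [div_eq_one_iff_eq hdetA.ne_zero, mul_right_comm, ← mul_pow, one_div, inv_mul_cancel₀ hσC,
      one_pow, one_mul]
  obtain ⟨hKre, hKeq⟩ := det_re_pos hKPD
  obtain ⟨hEre, hEeq⟩ := det_re_pos hEminPD
  have hre1 : (1 + σ2⁻¹ • (H * P * Hᴴ) : Matrix (Fin S) (Fin S) ℂ).det.re * Emin.det.re = 1 := by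
    have h := hdetprod
    rw [hKeq, hEeq, ← Complex.ofReal_mul] at h
    exact_mod_cast h
  have hlogE : Real.log Emin.det.re
      = -Real.log ((1 + σ2⁻¹ • (H * P * Hᴴ) : Matrix (Fin S) (Fin S) ℂ).det.re) := by
    rw [eq_inv_of_mul_eq_one_left (by linarith [hre1] : Emin.det.re *
      (1 + σ2⁻¹ • (H * P * Hᴴ) : Matrix (Fin S) (Fin S) ℂ).det.re = 1), Real.log_inv]
  constructor
  · intro W hW U
    have hD : ((U - Uopt)ᴴ * A * (U - Uopt)).PosSemidef :=
      hA.posSemidef.conjTranspose_mul_mul_same (U - Uopt)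
    have ha : (W * mseMat σ2 H Q U).trace.re
        = (W * ((U - Uopt)ᴴ * A * (U - Uopt))).trace.re + (W * Emin).trace.re := by
      rw [hdecomp U, Matrix.mul_add, Matrix.trace_add, Complex.add_re]
    have hb : 0 ≤ (W * ((U - Uopt)ᴴ * A * (U - Uopt))).trace.re :=
      trace_mul_re_nonneg hW.posSemidef hD
    -- square root of W
    set R : Matrix (Fin N) (Fin N) ℂ := hW.posSemidef.sqrt with hR
    have hRH : Rᴴ = R := hW.posSemidef.posSemidef_sqrt.1
    have hRR : R * R = W := hW.posSemidef.sqrt_mul_self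
    have hRdet : R.det * R.det = W.det := by rw [← Matrix.det_mul, hRR]
    have hRunit : IsUnit R := by
      apply Matrix.isUnit_iff_isUnit_det _ |>.mpr
      have : IsUnit W.det := hW.det_pos.ne'.isUnit
      rw [← hRdet] at this
      exact isUnit_of_mul_isUnit_left this
    have hX : (R * Emin * R).PosDef := posdef_conj hEminPD hRunit hRH
    have hXtr : (R * Emin * R).trace = (W * Emin).trace := by
      rw [Matrix.trace_mul_cycle, hRR]
    have hXdet : (R * Emin * R).det = W.det * Emin.det := by
      rw [Matrix.det_mul, Matrix.det_mul, mul_comm, ← mul_assoc, hRdet]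
    obtain ⟨hWre, hWeq⟩ := det_re_pos hW
    have hXdetre : (R * Emin * R).det.re = W.det.re * Emin.det.re := by
      rw [hXdet, hWeq, hEeq, ← Complex.ofReal_mul]; simp
    have hlog := log_det_re_le hX
    rw [hXdetre, hXtr, Real.log_mul hWre.ne' hEre.ne'] at hlog
    rw [ha, ← hlogE]
    linarith
  · rw [hUoptEq, hEminEq]
    have hEdet : IsUnit Emin.det := hEminPD.det_pos.ne'.isUnit
    have hinv : Emin⁻¹ * Emin = 1 := Matrix.nonsing_inv_mul _ hEdet
    rw [hinv, Matrix.trace_one]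
    have hinvdet : (Emin⁻¹).det.re = (Emin.det.re)⁻¹ := by
      rw [Matrix.det_nonsing_inv, Ring.inverse_eq_inv', hEeq, ← Complex.ofReal_inv]
      simp
    rw [hinvdet, Real.log_inv, hlogE]
    simp
end

section
/- The MM iteration φ^{(ζ+1)} with entries φ_n^{(ζ+1)} = c_n^{(ζ)}/|c_n^{(ζ)}|, where c^{(ζ)} = (λ_max I − Δ)φ^{(ζ)} + b*, produces a nonincreasing objective sequence g(φ^{(ζ)}) = (φ^{(ζ)})ᴴ Δ φ^{(ζ)} − 2Re((φ^{(ζ)})ᴴ b*), i.e., g(φ^{(ζ+1)}) ≤ g(φ^{(ζ)}) for all ζ. -/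
open Matrix ComplexOrder

lemma shift_psd {N : ℕ} {Δ : Matrix (Fin N) (Fin N) ℂ} (hΔ : Δ.PosSemidef) {lmax : ℝ}
    (h : ∀ i, hΔ.1.eigenvalues i ≤ lmax) :
    ((lmax : ℂ) • (1 : Matrix (Fin N) (Fin N) ℂ) - Δ).PosSemidef := by
  set U : Matrix (Fin N) (Fin N) ℂ := (hΔ.1.eigenvectorUnitary : Matrix (Fin N) (Fin N) ℂ) with hUdef
  have hUU : U * Uᴴ = 1 := by
    rw [← star_eq_conjTranspose]
    exact (Matrix.mem_unitaryGroup_iff).mp hΔ.1.eigenvectorUnitary.2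
  have key : (lmax : ℂ) • (1 : Matrix (Fin N) (Fin N) ℂ) - Δ
      = U * diagonal (RCLike.ofReal ∘ fun i => lmax - hΔ.1.eigenvalues i) * Uᴴ := by
    have hsp := hΔ.1.spectral_theorem
    rw [← star_eq_conjTranspose] at *
    have hdiag : diagonal (RCLike.ofReal ∘ fun i => lmax - hΔ.1.eigenvalues i)
        = (lmax : ℂ) • (1 : Matrix (Fin N) (Fin N) ℂ)
          - diagonal (RCLike.ofReal ∘ hΔ.1.eigenvalues) := by
      ext i j
      by_cases hij : i = j <;>
        simp [hij, diagonal_apply, Matrix.one_apply, Matrix.sub_apply, Matrix.smul_apply]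
    rw [hdiag, mul_sub, sub_mul]
    conv_lhs => rw [hsp]
    rw [Unitary.conjStarAlgAut_apply]
    congr 1
    rw [mul_smul_comm, smul_mul_assoc, mul_one, hUU]
  rw [key]
  refine (posSemidef_diagonal_iff.mpr ?_).mul_mul_conjTranspose_same U
  intro i
  simp only [Function.comp_apply]
  rw [RCLike.nonneg_iff]
  simp [sub_nonneg, h i]

/-- The MM iteration `φ_n^{(ζ+1)} = c_n^{(ζ)}/|c_n^{(ζ)}|`, with
`c^{(ζ)} = (λ_max I − Δ)φ^{(ζ)} + b*`, produces a nonincreasing objective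
sequence `g(φ^{(ζ)}) = (φ^{(ζ)})ᴴΔφ^{(ζ)} − 2Re((φ^{(ζ)})ᴴb*)`. -/
theorem mm_iteration_monotone (N : ℕ) (Δ : Matrix (Fin N) (Fin N) ℂ)
    (hΔ : Δ.PosSemidef) (lmax : ℝ)
    (hmax : IsGreatest (Set.range hΔ.1.eigenvalues) lmax)
    (b : Fin N → ℂ) (φ c : ℕ → Fin N → ℂ)
    (hunit : ∀ ζ n, ‖φ ζ n‖ = 1)
    (hcdef : ∀ ζ, c ζ =
      (((lmax : ℂ) • (1 : Matrix (Fin N) (Fin N) ℂ) - Δ) *ᵥ φ ζ) + star b)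
    (hcnz : ∀ ζ n, c ζ n ≠ 0)
    (hiter : ∀ ζ n, φ (ζ + 1) n = c ζ n / (‖c ζ n‖ : ℂ)) :
    ∀ ζ : ℕ,
      (star (φ (ζ + 1)) ⬝ᵥ (Δ *ᵥ φ (ζ + 1))).re
          - 2 * (star (φ (ζ + 1)) ⬝ᵥ star b).re
        ≤ (star (φ ζ) ⬝ᵥ (Δ *ᵥ φ ζ)).re - 2 * (star (φ ζ) ⬝ᵥ star b).re := by
  intro ζ
  have hub : ∀ i, hΔ.1.eigenvalues i ≤ lmax := fun i => hmax.2 ⟨i, rfl⟩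
  set A : Matrix (Fin N) (Fin N) ℂ := (lmax : ℂ) • (1 : Matrix (Fin N) (Fin N) ℂ) - Δ with hAdef
  have hApsd : A.PosSemidef := shift_psd hΔ hub
  set x : Fin N → ℂ := φ ζ with hxdef
  set y : Fin N → ℂ := φ (ζ + 1) with hydef
  set cc : Fin N → ℂ := c ζ with hccdef
  -- unit norms
  have hnorm : ∀ z : Fin N → ℂ, (∀ n, ‖z n‖ = 1) → star z ⬝ᵥ z = (N : ℂ) := by
    intro z hz
    have h1 : ∀ n, (starRingEnd ℂ) (z n) * z n = 1 := by
      intro n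
      rw [← Complex.normSq_eq_conj_mul_self]
      norm_cast
      rw [← Complex.sq_norm, hz n, one_pow]
    simp [dotProduct, Pi.star_apply, Complex.star_def, h1]
  have hxN : star x ⬝ᵥ x = (N : ℂ) := hnorm x (hunit ζ)
  have hyN : star y ⬝ᵥ y = (N : ℂ) := hnorm y (hunit (ζ + 1))
  -- A quadratic form decomposition
  have hAform : ∀ z w : Fin N → ℂ,
      star z ⬝ᵥ A *ᵥ w = (lmax : ℂ) * (star z ⬝ᵥ w) - star z ⬝ᵥ Δ *ᵥ w := by
    intro z w
    rw [hAdef, sub_mulVec, dotProduct_sub, smul_mulVec, one_mulVec, dotProduct_smul,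
      smul_eq_mul]
  -- symmetry
  have hsymm : (star x ⬝ᵥ A *ᵥ y).re = (star y ⬝ᵥ A *ᵥ x).re := by
    have : star x ⬝ᵥ A *ᵥ y = star (star (A *ᵥ y) ⬝ᵥ x) := star_dotProduct _ _
    rw [this, star_mulVec, hApsd.1.eq] at *
    rw [Complex.star_def, Complex.conj_re, dotProduct_mulVec]
  -- PSD inequality, expanded
  have hq : 0 ≤ (star (y - x) ⬝ᵥ A *ᵥ (y - x)).re := (Complex.le_def.mp (hApsd.dotProduct_mulVec_nonneg (y - x))).1
  have hexp : star (y - x) ⬝ᵥ A *ᵥ (y - x)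
      = star y ⬝ᵥ A *ᵥ y - star y ⬝ᵥ A *ᵥ x - star x ⬝ᵥ A *ᵥ y + star x ⬝ᵥ A *ᵥ x := by
    rw [star_sub, mulVec_sub, sub_dotProduct, dotProduct_sub, dotProduct_sub]
    ring
  have hkey : 2 * (star y ⬝ᵥ A *ᵥ x).re - (star x ⬝ᵥ A *ᵥ x).re ≤ (star y ⬝ᵥ A *ᵥ y).re := by
    have h2 := congrArg Complex.re hexp
    simp only [Complex.add_re, Complex.sub_re] at h2
    rw [h2, hsymm] at hq
    linarith
  -- the absolute-value sum
  set S : ℝ := ∑ n, ‖cc n‖ with hSdef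
  have hyc : (star y ⬝ᵥ cc).re = S := by
    have hterm : ∀ n, star (y n) * cc n = (‖cc n‖ : ℂ) := by
      intro n
      have hr : (‖cc n‖ : ℂ) ≠ 0 := by
        exact_mod_cast norm_ne_zero_iff.mpr (hcnz ζ n)
      rw [hydef, hiter ζ n]
      rw [← hccdef]
      rw [star_div₀, div_mul_eq_mul_div]
      simp only [Complex.star_def]
      rw [Complex.conj_ofReal, ← Complex.normSq_eq_conj_mul_self, Complex.normSq_eq_norm_sq]
      push_cast
      rw [pow_two, mul_div_assoc, div_self hr, mul_one]
    simp only [dotProduct, Pi.star_apply, hterm]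
    rw [Complex.re_sum]
    simp [hSdef]
  have hxc : (star x ⬝ᵥ cc).re ≤ S := by
    simp only [dotProduct, Pi.star_apply, Complex.re_sum, hSdef]
    apply Finset.sum_le_sum
    intro n _
    calc (star (x n) * cc n).re ≤ ‖star (x n) * cc n‖ := Complex.re_le_norm _
      _ = ‖x n‖ * ‖cc n‖ := by
          rw [norm_mul]
          simp only [Complex.star_def, Complex.norm_conj]
      _ = ‖cc n‖ := by rw [hunit ζ n, one_mul]
  -- decomposition via c
  have hc : cc = A *ᵥ x + star b := hcdef ζ
  have hycd : (star y ⬝ᵥ A *ᵥ x).re = S - (star y ⬝ᵥ star b).re := by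
    have : star y ⬝ᵥ cc = star y ⬝ᵥ A *ᵥ x + star y ⬝ᵥ star b := by
      rw [hc, dotProduct_add]
    have h3 := congrArg Complex.re this
    rw [hyc, Complex.add_re] at h3
    linarith
  have hxcd : (star x ⬝ᵥ A *ᵥ x).re = (star x ⬝ᵥ cc).re - (star x ⬝ᵥ star b).re := by
    have : star x ⬝ᵥ cc = star x ⬝ᵥ A *ᵥ x + star x ⬝ᵥ star b := by
      rw [hc, dotProduct_add]
    have h3 := congrArg Complex.re this
    rw [Complex.add_re] at h3
    linarith
  -- convert Δ forms to A forms
  have gy : (star y ⬝ᵥ Δ *ᵥ y).re = lmax * N - (star y ⬝ᵥ A *ᵥ y).re := by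
    have h4 := congrArg Complex.re (hAform y y)
    rw [hyN] at h4
    have : ((lmax : ℂ) * (N : ℂ)).re = lmax * N := by
      norm_cast
    rw [Complex.sub_re, this] at h4
    linarith
  have gx : (star x ⬝ᵥ Δ *ᵥ x).re = lmax * N - (star x ⬝ᵥ A *ᵥ x).re := by
    have h4 := congrArg Complex.re (hAform x x)
    rw [hxN] at h4
    have : ((lmax : ℂ) * (N : ℂ)).re = lmax * N := by
      norm_cast
    rw [Complex.sub_re, this] at h4
    linarith
  rw [gy, gx]
  linarith
end
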